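/- Let ψ be a strict Archimedean generator (i.e., ψ(t) > 0 for all t ≥ 0, so ψ^{−1}(0) = ∞), let (η_n) be positive reals with η_n → ∞, assume 1 − ψ(1/·) is regularly varying at ∞ with index −ρ for some ρ ∈ (0,1], and define r_n = 1/(1 − ψ(1/η_n)). Suppose η_{⌈nt⌉}/η_n → κ(t) as n → ∞ for every t > 0, where κ : (0,∞) → (0,∞) is a bijection. Then r_{⌈nt⌉}/r_n → κ(t)^ρ as n → ∞ for every t > 0. Moreover, if F is a continuous distribution function on ℝ, δ_n(u) = ψ(η_n ψ^{−1}(u)) (with δ_n(0) = 0), and there exist sequences (c_n), c_n > 0, and (d_n) and a nondegenerate distribution function G with δ_n(F(c_n x + d_n)) → G(x) at every continuity point x of G, then G = D ∘ H where D(u) = ψ((−log u)^{1/ρ}) and H is a GEV distribution function. (Proposition on uniqueness of Archimax limits.) -/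

import Mathlib

open Filter Set Topology

/-- The generalized extreme value (GEV) distribution function `H_{ξ,μ,σ}`. -/
noncomputable def GEVcdf (ξ μ σ : ℝ) : ℝ → ℝ := fun x =>
  if ξ = 0 then Real.exp (-Real.exp (-(x - μ) / σ))
  else if 0 < 1 + ξ * (x - μ) / σ then Real.exp (-(1 + ξ * (x - μ) / σ) ^ (-1 / ξ))
  else if 0 < ξ then 0 else 1

/-- A distribution function is GEV if it equals some `H_{ξ,μ,σ}` with `σ > 0`. -/
def IsGEV (H : ℝ → ℝ) : Prop := ∃ ξ μ σ : ℝ, 0 < σ ∧ H = GEVcdf ξ μ σ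

/-- A distribution function on `ℝ`: nondecreasing, right-continuous, with limits 0 at `-∞`
and 1 at `∞`, taking values in `[0,1]`. -/
def IsDistFun (F : ℝ → ℝ) : Prop :=
  Monotone F ∧ (∀ x, ContinuousWithinAt F (Ici x) x) ∧
    Tendsto F atBot (nhds 0) ∧ Tendsto F atTop (nhds 1) ∧ ∀ x, F x ∈ Icc (0:ℝ) 1

/-- The properties of the diagonal `u ↦ C_n(u,…,u)` of an `n`-dimensional copula. -/
def IsCopulaDiagonal (n : ℕ) (δ : ℝ → ℝ) : Prop :=
  δ 0 = 0 ∧ δ 1 = 1 ∧ MonotoneOn δ (Icc 0 1) ∧ (∀ u ∈ Icc (0:ℝ) 1, δ u ≤ u) ∧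
    ∀ u ∈ Icc (0:ℝ) 1, ∀ v ∈ Icc (0:ℝ) 1, |δ u - δ v| ≤ (n : ℝ) * |u - v|

/-- A distribution function on `[0,1]`: nondecreasing, right-continuous, `D(0)=0`, `D(1)=1`,
with values in `[0,1]`. -/
def IsDistFun01 (D : ℝ → ℝ) : Prop :=
  D 0 = 0 ∧ D 1 = 1 ∧ MonotoneOn D (Icc 0 1) ∧
    (∀ u ∈ Ico (0:ℝ) 1, ContinuousWithinAt D (Icc u 1) u) ∧
    ∀ u ∈ Icc (0:ℝ) 1, D u ∈ Icc (0:ℝ) 1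

/-- A degenerate distribution function `x ↦ 1_{[a,∞)}(x)`. -/
noncomputable def IsDegenerateDF (G : ℝ → ℝ) : Prop :=
  ∃ a : ℝ, ∀ x, G x = if a ≤ x then 1 else 0

/-- An Archimedean generator: continuous on `[0,∞)`, `ψ(0)=1`, values in `[0,1]`,
`ψ(t) → 0` as `t → ∞`, strictly decreasing on `[0, inf{x : ψ(x)=0}]` (equivalently,
strictly decreasing as long as it is positive). -/
def IsArchimedeanGenerator (ψ : ℝ → ℝ) : Prop :=
  ContinuousOn ψ (Ici 0) ∧ ψ 0 = 1 ∧ (∀ t ∈ Ici (0:ℝ), ψ t ∈ Icc (0:ℝ) 1) ∧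
    Tendsto ψ atTop (nhds 0) ∧
    ∀ s t : ℝ, 0 ≤ s → s < t → 0 < ψ s → ψ t < ψ s

/-!
Put `V = (ψ⁻¹ ∘ G) ^ ρ`. Since `1 - ψ (1 / ·)` is regularly varying, a level of `δ_n u` is a
level of `r_n (1 - u)`, so the Archimax convergence becomes the tail convergence
`r_n (1 - F (c_n x + d_n)) → V x`. The first claim is the uniformity of regular variation along
`η_⌈nt⌉ ~ κ(t) η_n`. As `κ` is onto, every `s > 0` is a limit of `r_⌈nt⌉ / r_n`, and the
convergence of types theorem applied to the sequences `n` and `⌈nt⌉` gives `V (A x + B) = V x / s`: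
`H = exp (-V)` is max-stable. The quantile function of `V` then solves
`Q (w / s) = A(s) Q(w) + B(s)`, whose monotone solutions are the GEV quantiles, so `H` is GEV and
`G = ψ ((-log H) ^ (1 / ρ))`.
-/

open scoped ENNReal

theorem StrictAntiOn.tendsto_of_tendsto_comp {α : Type*} {f : ℝ → ℝ} (hf : StrictAntiOn f (Ici 0))
    {l : Filter α} {t : α → ℝ} (ht : ∀ᶠ i in l, 0 ≤ t i) {t₀ : ℝ} (ht₀ : 0 ≤ t₀)
    (h : Tendsto (fun i => f (t i)) l (𝓝 (f t₀))) : Tendsto t l (𝓝 t₀) := by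
  rw [tendsto_order]
  refine ⟨fun a ha => ?_, fun a ha => ?_⟩
  · rcases lt_or_ge a 0 with ha₀ | ha₀
    · filter_upwards [ht] with i hi using ha₀.trans_le hi
    · filter_upwards [ht, h.eventually (eventually_lt_nhds ((hf.lt_iff_gt ht₀ ha₀).2 ha))]
        with i hi hfi using (hf.lt_iff_gt hi ha₀).1 hfi
  · have ha₀ : (0 : ℝ) ≤ a := ht₀.trans ha.le
    filter_upwards [ht, h.eventually (eventually_gt_nhds ((hf.lt_iff_gt ha₀ ht₀).2 ha))]
      with i hi hfi using (hf.lt_iff_gt ha₀ hi).1 hfi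

section RegularVariation

variable {f : ℝ → ℝ} {ρ : ℝ} (hf : AntitoneOn f (Ioi 0)) (hf₀ : ∀ x, 0 < x → 0 < f x)
  (hRV : ∀ lam : ℝ, 0 < lam → Tendsto (fun t => f (lam * t) / f t) atTop (𝓝 (lam ^ (-ρ))))
  {η s : ℕ → ℝ} (hη : ∀ n, 0 < η n) (hηtop : Tendsto η atTop atTop)

include hf hf₀ hRV hη hηtop

theorem tendsto_div_of_tendsto_div {c : ℝ} (hc : 0 < c)
    (hs : Tendsto (fun n => s n / η n) atTop (𝓝 c)) :
    Tendsto (fun n => f (s n) / f (η n)) atTop (𝓝 (c ^ (-ρ))) := by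
  have hRVη : ∀ lam, 0 < lam → Tendsto (fun n => f (lam * η n) / f (η n)) atTop
      (𝓝 (lam ^ (-ρ))) := fun lam hlam => (hRV lam hlam).comp hηtop
  have hcont : Tendsto (fun lam : ℝ => lam ^ (-ρ)) (𝓝 c) (𝓝 (c ^ (-ρ))) :=
    (Real.continuousAt_rpow_const c (-ρ) (Or.inl hc.ne')).tendsto
  have hs₀ : ∀ᶠ n in atTop, 0 < s n := by
    filter_upwards [hs.eventually (eventually_gt_nhds hc)] with n hn
    exact (div_pos_iff_of_pos_right (hη n)).1 hn
  have hdiv : ∀ n, 0 < f (η n) := fun n => hf₀ _ (hη n)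
  rw [tendsto_order]
  refine ⟨fun a ha => ?_, fun a ha => ?_⟩
  · obtain ⟨lam, hlam_a, hc_lam⟩ := (((hcont.mono_left nhdsWithin_le_nhds).eventually
      (eventually_gt_nhds ha)).and (self_mem_nhdsWithin (s := Ioi c))).exists
    have hlam : 0 < lam := hc.trans hc_lam
    filter_upwards [(hRVη lam hlam).eventually (eventually_gt_nhds hlam_a),
      hs.eventually (eventually_lt_nhds hc_lam), hs₀] with n h_lim h_lt h_pos
    have h_le : s n ≤ lam * η n := ((div_lt_iff₀ (hη n)).1 h_lt).le
    calc a < f (lam * η n) / f (η n) := h_lim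
      _ ≤ f (s n) / f (η n) :=
        div_le_div_of_nonneg_right (hf h_pos (mul_pos hlam (hη n)) h_le) (hdiv n).le
  · obtain ⟨lam, hlam_a, hlam, hlam_c⟩ := (((hcont.mono_left nhdsWithin_le_nhds).eventually
      (eventually_lt_nhds ha)).and (Ioo_mem_nhdsLT hc)).exists
    filter_upwards [(hRVη lam hlam).eventually (eventually_lt_nhds hlam_a),
      hs.eventually (eventually_gt_nhds hlam_c), hs₀] with n h_lim h_gt h_pos
    have h_le : lam * η n ≤ s n := ((lt_div_iff₀ (hη n)).1 h_gt).le
    calc f (s n) / f (η n) ≤ f (lam * η n) / f (η n) :=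
          div_le_div_of_nonneg_right (hf (mul_pos hlam (hη n)) h_pos h_le) (hdiv n).le
      _ < a := h_lim

theorem tendsto_inv_div_inv_of_tendsto_div {c : ℝ} (hc : 0 < c)
    (hs : Tendsto (fun n => s n / η n) atTop (𝓝 c)) :
    Tendsto (fun n => 1 / f (s n) / (1 / f (η n))) atTop (𝓝 (c ^ ρ)) := by
  have h := (tendsto_div_of_tendsto_div hf hf₀ hRV hη hηtop hc hs).inv₀
    (Real.rpow_pos_of_pos hc _).ne'
  rw [Real.rpow_neg hc.le, inv_inv] at h
  exact h.congr fun n => by rw [inv_div, div_div_div_cancel_left' _ _ one_ne_zero]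

end RegularVariation

section Density

theorem dense_of_countable_compl {D : Set ℝ} (hD : Dᶜ.Countable) : Dense D := by
  simpa using hD.dense_compl ℝ

theorem Dense.nhdsWithin_inter_neBot {X : Type*} [TopologicalSpace X] {D U : Set X}
    (hD : Dense D) (hU : IsOpen U) {x : X} (hx : x ∈ closure U) : (𝓝[U ∩ D] x).NeBot :=
  mem_closure_iff_nhdsWithin_neBot.1
    (closure_minimal (hD.open_subset_closure_inter hU) isClosed_closure hx)

theorem Dense.exists_mem_of_eventually_atTop {D : Set ℝ} (hD : Dense D) {P : ℝ → Prop}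
    (h : ∀ᶠ x in atTop, P x) : ∃ x ∈ D, P x := by
  obtain ⟨a, ha⟩ := h.exists_forall_of_atTop
  obtain ⟨x, hxD, hx⟩ := hD.exists_gt a
  exact ⟨x, hxD, ha x hx.le⟩

theorem Dense.exists_mem_of_eventually_atBot {D : Set ℝ} (hD : Dense D) {P : ℝ → Prop}
    (h : ∀ᶠ x in atBot, P x) : ∃ x ∈ D, P x := by
  obtain ⟨a, ha⟩ := h.exists_forall_of_atBot
  obtain ⟨x, hxD, hx⟩ := hD.exists_lt a
  exact ⟨x, hxD, ha x hx.le⟩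

variable {β : Type*} [TopologicalSpace β] [LinearOrder β] [OrderClosedTopology β]

theorem ContinuousAt.eq_of_dense_of_le_of_ge {V : ℝ → β} {D : Set ℝ} {p : ℝ} {w : β}
    (hV : ContinuousAt V p) (hD : Dense D) (h_gt : ∀ z ∈ D, p < z → V z ≤ w)
    (h_lt : ∀ z ∈ D, z < p → w ≤ V z) : V p = w := by
  have := hD.nhdsWithin_inter_neBot (U := Ioi p) (x := p) isOpen_Ioi (by simp)
  have := hD.nhdsWithin_inter_neBot (U := Iio p) (x := p) isOpen_Iio (by simp)
  exact le_antisymm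
    (le_of_tendsto (hV.tendsto.mono_left (nhdsWithin_le_nhds (s := Ioi p ∩ D)))
      (eventually_nhdsWithin_of_forall fun z hz => h_gt z hz.2 hz.1))
    (ge_of_tendsto (hV.tendsto.mono_left (nhdsWithin_le_nhds (s := Iio p ∩ D)))
      (eventually_nhdsWithin_of_forall fun z hz => h_lt z hz.2 hz.1))

theorem eq_of_continuousWithinAt_Ici_of_eqOn {f g : ℝ → β} {D : Set ℝ}
    (hf : ∀ x, ContinuousWithinAt f (Ici x) x) (hg : ∀ x, ContinuousWithinAt g (Ici x) x)
    (hD : Dense D) (h : EqOn f g D) : f = g := by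
  funext x
  have := hD.nhdsWithin_inter_neBot (U := Ioi x) (x := x) isOpen_Ioi (by simp)
  have hsub : Ioi x ∩ D ⊆ Ici x := inter_subset_left.trans Ioi_subset_Ici_self
  exact tendsto_nhds_unique ((hf x).mono hsub)
    (((hg x).mono hsub).congr' (eventually_nhdsWithin_of_forall fun z hz => (h hz.2).symm))

end Density

section ConvergenceOfTypes

variable {β : Type*} [TopologicalSpace β] [LinearOrder β] [OrderClosedTopology β]
  {ι : Type*} {l : Filter ι} {g : ι → ℝ → β} (hg : ∀ i, Antitone (g i))
include hg

theorem eventually_mem_Ioo_of_antitone {y₁ y₂ : ℝ} {v₁ v₂ w : β}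
    (h₁ : Tendsto (fun i => g i y₁) l (𝓝 v₁)) (h₂ : Tendsto (fun i => g i y₂) l (𝓝 v₂))
    {z : ι → ℝ} (hz : Tendsto (fun i => g i (z i)) l (𝓝 w)) (hw₁ : w < v₁) (hw₂ : v₂ < w) :
    ∀ᶠ i in l, z i ∈ Ioo y₁ y₂ := by
  filter_upwards [hz.eventually_lt h₁ hw₁, h₂.eventually_lt hz hw₂] with i h₁ h₂
  exact ⟨lt_of_not_ge fun h => h₁.not_ge (hg i h), lt_of_not_ge fun h => h₂.not_ge (hg i h)⟩

variable [l.NeBot] {y : ι → ℝ} {p z : ℝ} {v w : β} (hz : Tendsto (fun i => g i z) l (𝓝 v))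
  (hy : Tendsto y l (𝓝 p)) (hgy : Tendsto (fun i => g i (y i)) l (𝓝 w))
include hz hy hgy

theorem le_of_tendsto_of_antitone (hpz : p < z) : v ≤ w :=
  le_of_tendsto_of_tendsto hz hgy
    (by filter_upwards [hy.eventually (eventually_lt_nhds hpz)] with i hi using hg i hi.le)

theorem ge_of_tendsto_of_antitone (hzp : z < p) : w ≤ v :=
  le_of_tendsto_of_tendsto hgy hz
    (by filter_upwards [hy.eventually (eventually_gt_nhds hzp)] with i hi using hg i hi.le)

end ConvergenceOfTypes

theorem exists_subseq_tendsto_of_mem_Ioo {a b : ℕ → ℝ} (ha : ∀ n, 0 < a n) {x₀ x₁ y₁ y₂ : ℝ}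
    (hx : x₀ < x₁) (h₀ : ∀ᶠ n in atTop, a n * x₀ + b n ∈ Ioo y₁ y₂)
    (h₁ : ∀ᶠ n in atTop, a n * x₁ + b n ∈ Ioo y₁ y₂) :
    ∃ A B : ℝ, ∃ φ : ℕ → ℕ, StrictMono φ ∧
      Tendsto (a ∘ φ) atTop (𝓝 A) ∧ Tendsto (b ∘ φ) atTop (𝓝 B) := by
  set C := (y₂ - y₁) / (x₁ - x₀)
  have hK : Bornology.IsBounded (Icc 0 C ×ˢ Icc (y₁ - C * |x₀|) (y₂ + C * |x₀|)) :=
    (Metric.isBounded_Icc _ _).prod (Metric.isBounded_Icc _ _)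
  have hmem : ∀ᶠ n in atTop, (a n, b n) ∈ Icc 0 C ×ˢ Icc (y₁ - C * |x₀|) (y₂ + C * |x₀|) := by
    filter_upwards [h₀, h₁] with n h₀ h₁
    have haC : a n ≤ C := by
      rw [le_div_iff₀ (sub_pos.2 hx), mul_sub]
      linarith [h₀.1, h₁.2]
    have hax : |a n * x₀| ≤ C * |x₀| := by
      rw [abs_mul, abs_of_pos (ha n)]
      exact mul_le_mul_of_nonneg_right haC (abs_nonneg _)
    obtain ⟨h1, h2⟩ := abs_le.1 hax
    exact ⟨⟨(ha n).le, haC⟩, by constructor <;> linarith [h₀.1, h₀.2]⟩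
  obtain ⟨⟨A, B⟩, -, φ, hφ, hlim⟩ := tendsto_subseq_of_frequently_bounded hK hmem.frequently
  exact ⟨A, B, φ, hφ, (continuous_fst.tendsto _).comp hlim, (continuous_snd.tendsto _).comp hlim⟩

/-- The convergence of types theorem. -/
theorem exists_affine_eq_of_tendsto {g : ℕ → ℝ → ℝ≥0∞} (hg : ∀ n, Antitone (g n))
    {V W : ℝ → ℝ≥0∞} {D : Set ℝ} (hD : Dense D) {a b : ℕ → ℝ} (ha : ∀ n, 0 < a n)
    (hgV : ∀ x ∈ D, Tendsto (fun n => g n x) atTop (𝓝 (V x)))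
    (hgW : ∀ x ∈ D, Tendsto (fun n => g n (a n * x + b n)) atTop (𝓝 (W x)))
    (hV_bot : Tendsto V atBot (𝓝 ⊤)) (hV_top : Tendsto V atTop (𝓝 0))
    (hW_bot : Tendsto W atBot (𝓝 ⊤)) (hW_top : Tendsto W atTop (𝓝 0))
    (hVc : ∀ x ∈ D, ContinuousAt V x) {x₀ x₁ : ℝ} (hx : x₀ < x₁) (hx₀ : x₀ ∈ D)
    (hx₁ : x₁ ∈ D) (hV₀ : V x₀ ≠ ⊤) (hV₁ : V x₁ ≠ 0) (hW₀ : W x₀ ∈ Ioo 0 ⊤)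
    (hW₁ : W x₁ ∈ Ioo 0 ⊤) :
    ∃ A B : ℝ, 0 < A ∧ ∀ x ∈ D, A * x + B ∈ D → V (A * x + B) = W x := by
  obtain ⟨y₁, hy₁D, hy₁⟩ := hD.exists_mem_of_eventually_atBot
    (hV_bot.eventually (eventually_gt_nhds (max_lt hW₀.2 hW₁.2)))
  obtain ⟨y₂, hy₂D, hy₂⟩ := hD.exists_mem_of_eventually_atTop
    (hV_top.eventually (eventually_lt_nhds (lt_min hW₀.1 hW₁.1)))
  have hbracket : ∀ x ∈ D, W x < V y₁ → V y₂ < W x →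
      ∀ᶠ n in atTop, a n * x + b n ∈ Ioo y₁ y₂ := fun x hx h₁ h₂ =>
    eventually_mem_Ioo_of_antitone hg (hgV y₁ hy₁D) (hgV y₂ hy₂D) (hgW x hx) h₁ h₂
  obtain ⟨A, B, φ, hφ, hA, hB⟩ := exists_subseq_tendsto_of_mem_Ioo ha hx
    (hbracket x₀ hx₀ ((le_max_left _ _).trans_lt hy₁) (hy₂.trans_le (min_le_left _ _)))
    (hbracket x₁ hx₁ ((le_max_right _ _).trans_lt hy₁) (hy₂.trans_le (min_le_right _ _)))
  have hgφ : ∀ k, Antitone (g (φ k)) := fun k => hg (φ k)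
  have hy : ∀ x, Tendsto (fun k => a (φ k) * x + b (φ k)) atTop (𝓝 (A * x + B)) :=
    fun x => (hA.mul_const x).add hB
  have h_le : ∀ x ∈ D, ∀ z ∈ D, A * x + B < z → V z ≤ W x := fun x hx z hz h =>
    le_of_tendsto_of_antitone hgφ ((hgV z hz).comp hφ.tendsto_atTop) (hy x)
      ((hgW x hx).comp hφ.tendsto_atTop) h
  have h_ge : ∀ x ∈ D, ∀ z ∈ D, z < A * x + B → W x ≤ V z := fun x hx z hz h =>
    ge_of_tendsto_of_antitone hgφ ((hgV z hz).comp hφ.tendsto_atTop) (hy x)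
      ((hgW x hx).comp hφ.tendsto_atTop) h
  -- `A = 0` would make `V` jump from `⊤` to `0` at `B`, missing the finite nonzero values.
  have hA₀ : 0 < A := by
    refine (ge_of_tendsto' hA fun k => (ha _).le).lt_of_ne' fun hA₀ => ?_
    subst hA₀
    rcases lt_or_ge B x₁ with hB₁ | hB₁
    · obtain ⟨x, hxD, hWx⟩ := hD.exists_mem_of_eventually_atTop
        (hW_top.eventually (eventually_lt_nhds (pos_iff_ne_zero.2 hV₁)))
      exact (h_le x hxD x₁ hx₁ (by simpa using hB₁)).not_gt hWx
    · obtain ⟨x, hxD, hWx⟩ := hD.exists_mem_of_eventually_atBot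
        (hW_bot.eventually (eventually_gt_nhds (lt_top_iff_ne_top.2 hV₀)))
      exact (h_ge x hxD x₀ hx₀ (by simpa using hx.trans_le hB₁)).not_gt hWx
  exact ⟨A, B, hA₀, fun x hx hxD => (hVc _ hxD).eq_of_dense_of_le_of_ge hD
    (fun z hz h => h_le x hx z hz h) (fun z hz h => h_ge x hx z hz h)⟩

theorem comp_affine_eq_of_eqOn {β : Type*} [TopologicalSpace β] [LinearOrder β]
    [OrderClosedTopology β] {V W : ℝ → β} (hV : ∀ x, ContinuousWithinAt V (Ici x) x)
    (hW : ∀ x, ContinuousWithinAt W (Ici x) x) {D : Set ℝ} (hD : Dᶜ.Countable) {A B : ℝ}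
    (hA : 0 < A) (h : ∀ x ∈ D, A * x + B ∈ D → V (A * x + B) = W x) :
    ∀ x, V (A * x + B) = W x := by
  have hinj : Function.Injective fun x : ℝ => A * x + B := fun x y hxy => by
    simpa [hA.ne'] using hxy
  have hD' : (D ∩ (fun x => A * x + B) ⁻¹' D)ᶜ.Countable := by
    rw [compl_inter, ← preimage_compl]
    exact hD.union (hD.preimage hinj)
  refine congr_fun (eq_of_continuousWithinAt_Ici_of_eqOn (fun x => ?_) hW
    (dense_of_countable_compl hD') fun x hx => h x hx.1 hx.2)
  have haff : Continuous fun x : ℝ => A * x + B := by fun_prop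
  exact ContinuousWithinAt.comp (f := fun x => A * x + B) (hV (A * x + B))
    haff.continuousWithinAt fun y hy => add_le_add_left (mul_le_mul_of_nonneg_left hy hA.le) B

section CauchyEquation

theorem Monotone.eq_mul_of_map_add {M : ℝ → ℝ} (hM : Monotone M)
    (hadd : ∀ u v, M (u + v) = M u + M v) (v : ℝ) : M v = M 1 * v := by
  have hq : ∀ q : ℚ, M q = M 1 * q := fun q => by
    simpa [Rat.smul_def, mul_comm] using map_rat_smul (AddMonoidHom.mk' M hadd) q 1
  have h₀ : M 0 = 0 := by simpa using hq 0
  have h₁ : 0 ≤ M 1 := h₀ ▸ hM zero_le_one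
  have hc : Continuous fun t => M 1 * t := continuous_const.mul continuous_id
  apply le_antisymm
  · refine _root_.ge_of_tendsto ((hc.tendsto v).mono_left (nhdsWithin_le_nhds (s := Ioi v)))
      (eventually_nhdsWithin_of_forall fun u hu => ?_)
    obtain ⟨q, hvq, hqu⟩ := exists_rat_btwn (mem_Ioi.1 hu)
    calc M v ≤ M q := hM hvq.le
      _ = M 1 * q := hq q
      _ ≤ M 1 * u := mul_le_mul_of_nonneg_left hqu.le h₁
  · refine _root_.le_of_tendsto ((hc.tendsto v).mono_left (nhdsWithin_le_nhds (s := Iio v)))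
      (eventually_nhdsWithin_of_forall fun u hu => ?_)
    obtain ⟨q, huq, hqv⟩ := exists_rat_btwn (mem_Iio.1 hu)
    calc M 1 * u ≤ M 1 * q := mul_le_mul_of_nonneg_left huq.le h₁
      _ = M q := (hq q).symm
      _ ≤ M v := hM hqv.le

theorem MonotoneOn.eq_mul_log_of_map_mul {W : ℝ → ℝ} (hW : MonotoneOn W (Ioi 0))
    (hmul : ∀ s, 0 < s → ∀ y, 0 < y → W (s * y) = W s + W y) {y : ℝ} (hy : 0 < y) :
    W y = W (Real.exp 1) * Real.log y := by
  have hM : Monotone fun v => W (Real.exp v) := fun u v huv =>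
    hW (Real.exp_pos u) (Real.exp_pos v) (Real.exp_le_exp.2 huv)
  have h := hM.eq_mul_of_map_add (fun u v => by
    simp only [Real.exp_add, hmul _ (Real.exp_pos u) _ (Real.exp_pos v)]) (Real.log y)
  rwa [Real.exp_log hy] at h

theorem MonotoneOn.eq_rpow_of_map_mul {a : ℝ → ℝ} {c : ℝ} (hc : c ≠ 0)
    (hmono : MonotoneOn (fun y => c * a y) (Ioi 0)) (ha : ∀ y, 0 < y → 0 < a y)
    (hmul : ∀ s, 0 < s → ∀ y, 0 < y → a (s * y) = a s * a y) {y : ℝ} (hy : 0 < y) :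
    a y = y ^ Real.log (a (Real.exp 1)) := by
  have hlog := MonotoneOn.eq_mul_log_of_map_mul (W := fun y => c * Real.log (a y))
    (fun y hy z hz hyz => ?_) (fun s hs y hy => ?_) hy
  · have h := mul_left_cancel₀ hc (hlog.trans (mul_assoc _ _ _))
    rw [Real.rpow_def_of_pos hy, mul_comm, ← h, Real.exp_log (ha y hy)]
  · have h : c * a y ≤ c * a z := hmono hy hz hyz
    rcases hc.lt_or_gt with hneg | hpos
    · exact mul_le_mul_of_nonpos_left (Real.log_le_log (ha z hz) (by nlinarith)) hneg.le
    · exact mul_le_mul_of_nonneg_left (Real.log_le_log (ha y hy) (by nlinarith)) hpos.le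
  · simp only [hmul s hs y hy, Real.log_mul (ha s hs).ne' (ha y hy).ne']
    ring

theorem MonotoneOn.mul_pos_of_eq_mul_rpow_sub_one {W : ℝ → ℝ} (hW : MonotoneOn W (Ioi 0))
    {c θ : ℝ} (hc : c ≠ 0) (hθ : θ ≠ 0) (hWc : ∀ y, 0 < y → W y = c * (y ^ θ - 1)) :
    0 < c * θ := by
  have he : 0 ≤ c * (Real.exp θ - 1) := by
    have h := hW (mem_Ioi.2 one_pos) (mem_Ioi.2 (Real.exp_pos 1))
      (by linarith [Real.add_one_le_exp 1])
    rwa [hWc 1 one_pos, hWc _ (Real.exp_pos 1), Real.one_rpow, sub_self, mul_zero,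
      Real.exp_one_rpow] at h
  rcases hθ.lt_or_gt with hθ₀ | hθ₀
  · have h₁ : Real.exp θ < 1 := Real.exp_lt_one_iff.2 hθ₀
    have hc₀ : c < 0 := hc.lt_of_le (by nlinarith)
    nlinarith
  · have h₁ : 1 < Real.exp θ := Real.one_lt_exp_iff.2 hθ₀
    have hc₀ : 0 < c := hc.symm.lt_of_le (by nlinarith)
    nlinarith

variable {W : ℝ → ℝ} (hW : MonotoneOn W (Ioi 0)) {a : ℝ → ℝ}
  (hfe : ∀ s, 0 < s → ∀ y, 0 < y → W (s * y) = a s * W y + W s)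
include hW hfe

theorem MonotoneOn.exists_eq_mul_rpow_sub_one (ha : ∀ s, 0 < s → 0 < a s) {s₀ y₀ : ℝ}
    (hs₀ : 0 < s₀) (has₀ : a s₀ ≠ 1) (hy₀ : 0 < y₀) (hWy₀ : W y₀ ≠ 0) :
    ∃ θ : ℝ, θ ≠ 0 ∧ ∃ c : ℝ, 0 < c * θ ∧ ∀ y, 0 < y → W y = c * (y ^ θ - 1) := by
  have has₀' : a s₀ - 1 ≠ 0 := sub_ne_zero.2 has₀
  -- Exchanging the roles of `s` and `y` in the equation forces `W = c * (a - 1)`.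
  have hsymm : ∀ y, 0 < y → (a s₀ - 1) * W y = (a y - 1) * W s₀ := fun y hy => by
    linear_combination hfe y hy s₀ hs₀ - hfe s₀ hs₀ y hy + congrArg W (mul_comm s₀ y)
  set c := W s₀ / (a s₀ - 1)
  have hWa : ∀ y, 0 < y → W y = c * (a y - 1) := fun y hy => by
    rw [div_mul_eq_mul_div, eq_div_iff has₀']
    linear_combination hsymm y hy
  have hc : c ≠ 0 := fun hc => hWy₀ (by rw [hWa y₀ hy₀, hc, zero_mul])
  have hmul : ∀ s, 0 < s → ∀ y, 0 < y → a (s * y) = a s * a y := fun s hs y hy => by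
    have h := hfe s hs y hy
    rw [hWa _ (mul_pos hs hy), hWa y hy, hWa s hs] at h
    have h' : c * (a (s * y) - a s * a y) = 0 := by linear_combination h
    linarith [(mul_eq_zero.1 h').resolve_left hc]
  have hmono : MonotoneOn (fun y => c * a y) (Ioi 0) := fun y hy z hz hyz => by
    have h := hW hy hz hyz
    rw [hWa y hy, hWa z hz] at h
    linarith
  have hpow : ∀ y, 0 < y → a y = y ^ Real.log (a (Real.exp 1)) := fun y hy =>
    hmono.eq_rpow_of_map_mul hc ha hmul hy
  have hθ : Real.log (a (Real.exp 1)) ≠ 0 := fun h => has₀ (by rw [hpow s₀ hs₀, h, Real.rpow_zero])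
  have hWc : ∀ y, 0 < y → W y = c * (y ^ Real.log (a (Real.exp 1)) - 1) := fun y hy => by
    rw [hWa y hy, hpow y hy]
  exact ⟨_, hθ, c, hW.mul_pos_of_eq_mul_rpow_sub_one hc hθ hWc, hWc⟩

theorem MonotoneOn.eq_mul_log_or_eq_mul_rpow_sub_one (ha : ∀ s, 0 < s → 0 < a s) {y₀ : ℝ}
    (hy₀ : 0 < y₀) (hWy₀ : W y₀ ≠ 0) :
    (∃ c, 0 < c ∧ ∀ y, 0 < y → W y = c * Real.log y) ∨
      ∃ θ : ℝ, θ ≠ 0 ∧ ∃ c : ℝ, 0 < c * θ ∧ ∀ y, 0 < y → W y = c * (y ^ θ - 1) := by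
  by_cases ha₁ : ∀ s, 0 < s → a s = 1
  · have hlog : ∀ y, 0 < y → W y = W (Real.exp 1) * Real.log y := fun y hy =>
      hW.eq_mul_log_of_map_mul (fun s hs y hy => by
        rw [hfe s hs y hy, ha₁ s hs, one_mul, add_comm]) hy
    have hc₀ : W (Real.exp 1) ≠ 0 := fun h => hWy₀ (by rw [hlog y₀ hy₀, h, zero_mul])
    have hc₁ : 0 ≤ W (Real.exp 1) := by
      simpa [hlog 1 one_pos] using hW (mem_Ioi.2 one_pos) (mem_Ioi.2 (Real.exp_pos 1))
        (by linarith [Real.add_one_le_exp 1])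
    exact Or.inl ⟨_, hc₁.lt_of_ne' hc₀, hlog⟩
  · push Not at ha₁
    obtain ⟨s₀, hs₀, has₀⟩ := ha₁
    exact Or.inr (hW.exists_eq_mul_rpow_sub_one hfe ha hs₀ has₀ hy₀ hWy₀)

end CauchyEquation

theorem ENNReal.eq_of_forall_le_ofReal_iff {a b : ℝ≥0∞}
    (h : ∀ w : ℝ, 0 < w → (a ≤ ENNReal.ofReal w ↔ b ≤ ENNReal.ofReal w)) : a = b := by
  have key : ∀ a b : ℝ≥0∞, (∀ w : ℝ, 0 < w → b ≤ ENNReal.ofReal w → a ≤ ENNReal.ofReal w) →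
      a ≤ b := fun a b h => le_of_forall_gt_imp_ge_of_dense fun c hc => by
    rcases eq_or_ne c ⊤ with rfl | hc'
    · exact le_top
    · have hc₀ : 0 < c.toReal := ENNReal.toReal_pos (zero_le.trans_lt hc).ne' hc'
      rw [← ENNReal.ofReal_toReal hc'] at hc ⊢
      exact h _ hc₀ hc.le
  exact le_antisymm (key a b fun w hw => (h w hw).2) (key b a fun w hw => (h w hw).1)

theorem IsDistFun.countable_compl_continuousAt {G : ℝ → ℝ} (hG : IsDistFun G) :
    {x | ContinuousAt G x}ᶜ.Countable := by
  simpa [compl_ofPred] using hG.1.countable_not_continuousAt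

theorem IsDistFun.exists_continuousAt_mem_Ioo {G : ℝ → ℝ} (hG : IsDistFun G)
    (hnd : ¬ IsDegenerateDF G) : ∃ x, ContinuousAt G x ∧ G x ∈ Ioo 0 1 := by
  by_contra! h
  have hD := dense_of_countable_compl hG.countable_compl_continuousAt
  have h01 : ∀ x, ContinuousAt G x → G x = 0 ∨ G x = 1 := fun x hx => by
    by_contra! hne
    exact h x hx ⟨(hG.2.2.2.2 x).1.lt_of_ne' hne.1, (hG.2.2.2.2 x).2.lt_of_ne hne.2⟩
  obtain ⟨z₁, hz₁D, hz₁⟩ := hD.exists_mem_of_eventually_atTop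
    (hG.2.2.2.1.eventually (eventually_gt_nhds one_half_lt_one))
  have hGz₁ : G z₁ = 1 := (h01 z₁ hz₁D).resolve_left (by linarith)
  obtain ⟨z₀, hz₀⟩ := (hG.2.2.1.eventually (eventually_lt_nhds one_pos)).exists
  have hbdd : BddAbove {x | G x < 1} := ⟨z₁, fun x hx => le_of_not_gt fun hzx =>
    (hGz₁ ▸ hG.1 hzx.le).not_gt hx⟩
  refine hnd ⟨sSup {x | G x < 1}, fun x => ?_⟩
  split_ifs with hx
  · have hright : ∀ y, x < y → G y = 1 := fun y hy => le_antisymm (hG.2.2.2.2 y).2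
      (not_lt.1 fun hlt => (le_csSup hbdd hlt).not_gt (hx.trans_lt hy))
    exact tendsto_nhds_unique ((hG.2.1 x).mono Ioi_subset_Ici_self)
      (tendsto_const_nhds.congr' (eventually_nhdsWithin_of_forall fun y hy => (hright y hy).symm))
  · obtain ⟨y, hy, hxy⟩ := exists_lt_of_lt_csSup ⟨z₀, hz₀⟩ (not_le.1 hx)
    obtain ⟨z, hzD, hxz, hzy⟩ := hD.exists_between hxy
    have hz : G z = 0 := (h01 z hzD).resolve_right ((hG.1 hzy.le).trans_lt hy).ne
    exact le_antisymm (hz ▸ hG.1 hxz.le) (hG.2.2.2.2 x).1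

theorem IsDistFun.exists_lt_continuousAt_mem_Ioo {G : ℝ → ℝ} (hG : IsDistFun G)
    (hnd : ¬ IsDegenerateDF G) : ∃ x₀ x₁, x₀ < x₁ ∧ ContinuousAt G x₀ ∧ ContinuousAt G x₁ ∧
      G x₀ ∈ Ioo 0 1 ∧ G x₁ ∈ Ioo 0 1 := by
  obtain ⟨x₀, hc₀, hG₀⟩ := hG.exists_continuousAt_mem_Ioo hnd
  have := (dense_of_countable_compl hG.countable_compl_continuousAt).nhdsWithin_inter_neBot
    (U := Ioi x₀) (x := x₀) isOpen_Ioi (by simp)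
  obtain ⟨x₁, hG₁, hx, hc₁⟩ := (((hc₀.tendsto.mono_left nhdsWithin_le_nhds).eventually
    (isOpen_Ioo.mem_nhds hG₀)).and
      (self_mem_nhdsWithin (s := Ioi x₀ ∩ {x | ContinuousAt G x}))).exists
  exact ⟨x₀, x₁, hx, hc₀, hc₁, hG₀, hG₁⟩

namespace Archimax

/-- `V = -log H` for a distribution function `H`, with `-log 0 = ⊤`. -/
structure IsNegLogDistFun (V : ℝ → ℝ≥0∞) : Prop where
  antitone : Antitone V
  continuousWithinAt_Ici : ∀ x, ContinuousWithinAt V (Ici x) x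
  tendsto_atBot : Tendsto V atBot (𝓝 ⊤)
  tendsto_atTop : Tendsto V atTop (𝓝 0)

/-- For `H = exp (-V)` this reads `H (A x + B) ^ s = H x`. -/
def IsMaxStable (V : ℝ → ℝ≥0∞) : Prop :=
  ∀ s : ℝ, 0 < s → ∃ A B : ℝ, 0 < A ∧ ∀ x, V (A * x + B) = V x / ENNReal.ofReal s

noncomputable def quantile (V : ℝ → ℝ≥0∞) (w : ℝ) : ℝ := sInf {x | V x ≤ ENNReal.ofReal w}

noncomputable def negLog (u : ℝ) : ℝ≥0∞ := if u = 0 then ⊤ else ENNReal.ofReal (-Real.log u)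

/-- The point where `GEVcdf ξ μ σ` reaches `exp (-w)`. -/
noncomputable def gevQuantile (ξ μ σ w : ℝ) : ℝ :=
  μ + σ * if ξ = 0 then -Real.log w else (w ^ (-ξ) - 1) / ξ

namespace IsNegLogDistFun

variable {V : ℝ → ℝ≥0∞} (hV : IsNegLogDistFun V)
include hV

theorem div_const {S : ℝ≥0∞} (hS : S ≠ 0) (hS' : S ≠ ⊤) : IsNegLogDistFun fun x => V x / S where
  antitone _ _ h := ENNReal.div_le_div_right (hV.antitone h) S
  continuousWithinAt_Ici x :=
    (ENNReal.continuous_div_const S hS).continuousAt.comp_continuousWithinAt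
      (hV.continuousWithinAt_Ici x)
  tendsto_atBot := by
    simpa [Function.comp_def, ENNReal.top_div_of_ne_top hS'] using
      ((ENNReal.continuous_div_const S hS).tendsto ⊤).comp hV.tendsto_atBot
  tendsto_atTop := by
    simpa [Function.comp_def] using
      ((ENNReal.continuous_div_const S hS).tendsto 0).comp hV.tendsto_atTop

theorem le_ofReal_iff {w : ℝ} (hw : 0 < w) (x : ℝ) :
    V x ≤ ENNReal.ofReal w ↔ quantile V w ≤ x := by
  set S := {x | V x ≤ ENNReal.ofReal w}
  have hne : S.Nonempty :=
    (hV.tendsto_atTop.eventually (eventually_le_nhds (ENNReal.ofReal_pos.2 hw))).exists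
  have hbdd : BddBelow S := by
    obtain ⟨a, ha⟩ := (hV.tendsto_atBot.eventually
      (eventually_gt_nhds ENNReal.ofReal_lt_top)).exists_forall_of_atBot
    exact ⟨a, fun y hy => le_of_not_gt fun h => (ha y h.le).not_ge hy⟩
  refine ⟨fun h => csInf_le hbdd h, fun h => (hV.antitone h).trans ?_⟩
  refine le_of_tendsto ((hV.continuousWithinAt_Ici _).mono Ioi_subset_Ici_self)
    (eventually_nhdsWithin_of_forall fun y hy => ?_)
  obtain ⟨s, hs, hsy⟩ := (csInf_lt_iff hbdd hne).1 hy
  exact (hV.antitone hsy.le).trans hs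

theorem antitoneOn_quantile : AntitoneOn (quantile V) (Ioi 0) := fun _ hw _ hw' h =>
  (hV.le_ofReal_iff hw' _).1 (((hV.le_ofReal_iff hw _).2 le_rfl).trans (ENNReal.ofReal_le_ofReal h))

theorem quantile_div {A B s : ℝ} (hA : 0 < A) (hs : 0 < s)
    (h : ∀ x, V (A * x + B) = V x / ENNReal.ofReal s) {w : ℝ} (hw : 0 < w) :
    quantile V (w / s) = A * quantile V w + B := by
  refine eq_of_forall_ge_iff fun x => ?_
  have hx : V x = V ((x - B) / A) / ENNReal.ofReal s := by
    rw [← h]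
    congr 1
    field_simp
    ring
  rw [← hV.le_ofReal_iff (div_pos hw hs), hx,
    ENNReal.div_le_iff (ENNReal.ofReal_pos.2 hs).ne' ENNReal.ofReal_ne_top,
    ← ENNReal.ofReal_mul (div_pos hw hs).le, div_mul_cancel₀ _ hs.ne', hV.le_ofReal_iff hw,
    le_div_iff₀ hA]
  constructor <;> intro <;> linarith

end IsNegLogDistFun

theorem GEVcdf_mem_Icc (ξ μ σ x : ℝ) : GEVcdf ξ μ σ x ∈ Icc 0 1 := by
  have hexp : ∀ v : ℝ, 0 ≤ v → Real.exp (-v) ∈ Icc (0 : ℝ) 1 := fun v hv =>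
    ⟨(Real.exp_pos _).le, Real.exp_le_one_iff.2 (neg_nonpos.2 hv)⟩
  unfold GEVcdf
  split_ifs with h₁ h₂
  · exact hexp _ (Real.exp_pos _).le
  · exact hexp _ (Real.rpow_nonneg h₂.le _)
  · simp
  · simp

theorem GEVcdf_eq_std (ξ μ σ x : ℝ) : GEVcdf ξ μ σ x = GEVcdf ξ 0 1 ((x - μ) / σ) := by
  simp only [GEVcdf, sub_zero, div_one, mul_div_assoc, neg_div]

theorem negLog_exp_neg {v : ℝ} : negLog (Real.exp (-v)) = ENNReal.ofReal v := by
  rw [negLog, if_neg (Real.exp_pos _).ne', Real.log_exp, neg_neg]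

theorem negLog_GEVcdf_std_le_iff (ξ : ℝ) {w : ℝ} (hw : 0 < w) (t : ℝ) :
    negLog (GEVcdf ξ 0 1 t) ≤ ENNReal.ofReal w ↔ gevQuantile ξ 0 1 w ≤ t := by
  simp only [gevQuantile, zero_add, one_mul]
  rcases eq_or_ne ξ 0 with rfl | hξ
  · rw [GEVcdf, if_pos rfl, if_pos rfl, sub_zero, div_one, negLog_exp_neg,
      ENNReal.ofReal_le_ofReal_iff hw.le, ← Real.le_log_iff_exp_le hw, neg_le]
  simp only [GEVcdf, if_neg hξ, sub_zero, div_one]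
  have hwξ : 0 < w ^ (-ξ) := Real.rpow_pos_of_pos hw _
  by_cases hP : 0 < 1 + ξ * t
  · rw [if_pos hP, negLog_exp_neg, ENNReal.ofReal_le_ofReal_iff hw.le]
    have hPξ : ((1 + ξ * t) ^ (-1 / ξ)) ^ (-ξ) = 1 + ξ * t := by
      rw [← Real.rpow_mul hP.le, div_mul_eq_mul_div, neg_one_mul, neg_neg, div_self hξ,
        Real.rpow_one]
    have hPpos : 0 < (1 + ξ * t) ^ (-1 / ξ) := Real.rpow_pos_of_pos hP _
    rcases hξ.lt_or_gt with hξ₀ | hξ₀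
    · rw [div_le_iff_of_neg hξ₀, ← Real.rpow_le_rpow_iff hPpos.le hw.le (neg_pos.2 hξ₀), hPξ]
      constructor <;> intro <;> linarith
    · rw [div_le_iff₀ hξ₀, ← Real.rpow_le_rpow_iff_of_neg hw hPpos (neg_lt_zero.2 hξ₀), hPξ]
      constructor <;> intro <;> linarith
  · rw [if_neg hP]
    rcases hξ.lt_or_gt with hξ₀ | hξ₀
    · rw [if_neg hξ₀.not_gt, negLog, if_neg one_ne_zero, Real.log_one, neg_zero,
        ENNReal.ofReal_zero, div_le_iff_of_neg hξ₀]
      exact iff_of_true zero_le (by linarith)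
    · rw [if_pos hξ₀, negLog, if_pos rfl, div_le_iff₀ hξ₀]
      exact iff_of_false (by simp) (by linarith)

theorem negLog_GEVcdf_le_ofReal_iff {ξ μ σ w : ℝ} (hσ : 0 < σ) (hw : 0 < w) (x : ℝ) :
    negLog (GEVcdf ξ μ σ x) ≤ ENNReal.ofReal w ↔ gevQuantile ξ μ σ w ≤ x := by
  rw [GEVcdf_eq_std, negLog_GEVcdf_std_le_iff ξ hw, le_div_iff₀ hσ, gevQuantile, gevQuantile]
  constructor <;> intro <;> linarith

theorem exists_gevQuantile_eq {U : ℝ → ℝ} (hU : MonotoneOn U (Ioi 0)) {a b : ℝ → ℝ}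
    (ha : ∀ s, 0 < s → 0 < a s) (hfe : ∀ s, 0 < s → ∀ y, 0 < y → U (s * y) = a s * U y + b s)
    {y₀ : ℝ} (hy₀ : 0 < y₀) (hU₀ : U y₀ ≠ U 1) :
    ∃ ξ μ σ : ℝ, 0 < σ ∧ ∀ y, 0 < y → U y = gevQuantile ξ μ σ y⁻¹ := by
  have hW : MonotoneOn (fun y => U y - U 1) (Ioi 0) := fun y hy z hz h =>
    sub_le_sub_right (hU hy hz h) _
  have hWfe : ∀ s, 0 < s → ∀ y, 0 < y →
      U (s * y) - U 1 = a s * (U y - U 1) + (U s - U 1) := fun s hs y hy => by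
    have h := hfe s hs 1 one_pos
    rw [mul_one] at h
    rw [hfe s hs y hy, h]
    ring
  rcases hW.eq_mul_log_or_eq_mul_rpow_sub_one hWfe ha hy₀ (sub_ne_zero.2 hU₀) with
    ⟨c, hc, hlog⟩ | ⟨θ, hθ, c, hcθ, hpow⟩
  · refine ⟨0, U 1, c, hc, fun y hy => ?_⟩
    rw [gevQuantile, if_pos rfl, Real.log_inv, neg_neg]
    linarith [hlog y hy]
  · refine ⟨θ, U 1, c * θ, hcθ, fun y hy => ?_⟩
    rw [gevQuantile, if_neg hθ, Real.inv_rpow hy.le, Real.rpow_neg hy.le, inv_inv,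
      mul_assoc, mul_div_cancel₀ _ hθ]
    linarith [hpow y hy]

theorem IsNegLogDistFun.exists_isGEV {V : ℝ → ℝ≥0∞} (hV : IsNegLogDistFun V)
    (hstab : IsMaxStable V) {x₀ : ℝ} (h₀ : V x₀ ≠ 0) (h₀' : V x₀ ≠ ⊤) :
    ∃ H : ℝ → ℝ, IsGEV H ∧ ∀ x, V x = negLog (H x) := by
  choose! A B hA hAB using hstab
  set U := fun y => quantile V y⁻¹
  have hU : MonotoneOn U (Ioi 0) := fun y hy z hz h =>
    hV.antitoneOn_quantile (mem_Ioi.2 (inv_pos.2 hz)) (mem_Ioi.2 (inv_pos.2 hy)) (inv_anti₀ hy h)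
  have hfe : ∀ s, 0 < s → ∀ y, 0 < y → U (s * y) = A s * U y + B s := fun s hs y hy => by
    simpa only [U, mul_inv_rev, ← div_eq_mul_inv] using
      hV.quantile_div (hA s hs) hs (hAB s hs) (inv_pos.2 hy)
  set v₀ := (V x₀).toReal
  have hv₀ : 0 < v₀ := ENNReal.toReal_pos h₀ h₀'
  have hV₀ : V x₀ = ENNReal.ofReal v₀ := (ENNReal.ofReal_toReal h₀').symm
  have hQ₁ : quantile V v₀ ≤ x₀ := (hV.le_ofReal_iff hv₀ x₀).1 hV₀.le
  have hQ₂ : x₀ < quantile V (v₀ / 2) := not_le.1 fun h => by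
    have h' := (hV.le_ofReal_iff (half_pos hv₀) x₀).2 h
    rw [hV₀, ENNReal.ofReal_le_ofReal_iff (half_pos hv₀).le] at h'
    linarith
  obtain ⟨y₀, hy₀, hUy₀⟩ : ∃ y, 0 < y ∧ U y ≠ U 1 := by
    by_contra! h
    have h' := (h v₀⁻¹ (inv_pos.2 hv₀)).trans (h (v₀ / 2)⁻¹ (inv_pos.2 (half_pos hv₀))).symm
    simp only [U, inv_inv] at h'
    linarith
  obtain ⟨ξ, μ, σ, hσ, hUeq⟩ := exists_gevQuantile_eq hU hA hfe hy₀ hUy₀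
  refine ⟨GEVcdf ξ μ σ, ⟨ξ, μ, σ, hσ, rfl⟩, fun x =>
    ENNReal.eq_of_forall_le_ofReal_iff fun w hw => ?_⟩
  have hQ : quantile V w = gevQuantile ξ μ σ w := by simpa [U] using hUeq w⁻¹ (inv_pos.2 hw)
  rw [hV.le_ofReal_iff hw, hQ, negLog_GEVcdf_le_ofReal_iff hσ hw]

theorem tendsto_ofReal_mul_one_sub_rescale {F : ℝ → ℝ} {c d r : ℕ → ℝ} (hc : ∀ n, 0 < c n)
    (hr : ∀ n, 0 < r n) {m : ℕ → ℕ} (hm : Tendsto m atTop atTop) {s : ℝ} (hs : 0 < s)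
    (hrm : Tendsto (fun n => r (m n) / r n) atTop (𝓝 s)) {x : ℝ} {v : ℝ≥0∞}
    (hx : Tendsto (fun n => ENNReal.ofReal (r n * (1 - F (c n * x + d n)))) atTop (𝓝 v)) :
    Tendsto (fun n => ENNReal.ofReal
      (r n * (1 - F (c n * (c (m n) / c n * x + (d (m n) - d n) / c n) + d n)))) atTop
      (𝓝 (v / ENNReal.ofReal s)) := by
  have hsplit : ∀ n, r n * (1 - F (c n * (c (m n) / c n * x + (d (m n) - d n) / c n) + d n)) =
      (r (m n) / r n)⁻¹ * (r (m n) * (1 - F (c (m n) * x + d (m n)))) := fun n => by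
    have := (hc n).ne'
    have := (hr (m n)).ne'
    rw [show c n * (c (m n) / c n * x + (d (m n) - d n) / c n) + d n = c (m n) * x + d (m n) by
      field_simp; ring]
    field_simp
  rw [ENNReal.div_eq_inv_mul, ← ENNReal.ofReal_inv_of_pos hs]
  refine (ENNReal.Tendsto.mul (ENNReal.tendsto_ofReal (hrm.inv₀ hs.ne'))
    (Or.inl (ENNReal.ofReal_pos.2 (inv_pos.2 hs)).ne') (hx.comp hm)
    (Or.inr ENNReal.ofReal_ne_top)).congr fun n => ?_
  rw [hsplit, ENNReal.ofReal_mul (inv_nonneg.2 (div_pos (hr _) (hr n)).le)]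
  rfl

theorem isMaxStable_of_tendsto {F : ℝ → ℝ} (hF : Monotone F) {c d r : ℕ → ℝ}
    (hc : ∀ n, 0 < c n) (hr : ∀ n, 0 < r n)
    (hratio : ∀ s : ℝ, 0 < s → ∃ m : ℕ → ℕ, Tendsto m atTop atTop ∧
      Tendsto (fun n => r (m n) / r n) atTop (𝓝 s))
    {V : ℝ → ℝ≥0∞} (hV : IsNegLogDistFun V) {D : Set ℝ} (hD : Dᶜ.Countable)
    (hVc : ∀ x ∈ D, ContinuousAt V x)
    (hlim : ∀ x ∈ D, Tendsto (fun n => ENNReal.ofReal (r n * (1 - F (c n * x + d n)))) atTop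
      (𝓝 (V x)))
    {x₀ x₁ : ℝ} (hx : x₀ < x₁) (hx₀ : x₀ ∈ D) (hx₁ : x₁ ∈ D) (hV₀ : V x₀ ∈ Ioo 0 ⊤)
    (hV₁ : V x₁ ∈ Ioo 0 ⊤) : IsMaxStable V := by
  intro s hs
  obtain ⟨m, hm, hrm⟩ := hratio s hs
  have hS : ENNReal.ofReal s ≠ 0 := (ENNReal.ofReal_pos.2 hs).ne'
  have hW := hV.div_const hS ENNReal.ofReal_ne_top
  have hdiv : ∀ v : ℝ≥0∞, v ∈ Ioo 0 ⊤ → v / ENNReal.ofReal s ∈ Ioo 0 ⊤ := fun v hv =>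
    ⟨ENNReal.div_pos hv.1.ne' ENNReal.ofReal_ne_top, ENNReal.div_lt_top hv.2.ne hS⟩
  have hg : ∀ n, Antitone fun x => ENNReal.ofReal (r n * (1 - F (c n * x + d n))) :=
    fun n x y hxy => ENNReal.ofReal_le_ofReal (mul_le_mul_of_nonneg_left
      (sub_le_sub_left (hF (add_le_add_left (mul_le_mul_of_nonneg_left hxy (hc n).le) _)) 1)
      (hr n).le)
  obtain ⟨A, B, hA, hAB⟩ := exists_affine_eq_of_tendsto hg (dense_of_countable_compl hD)
    (fun n => div_pos (hc (m n)) (hc n)) hlim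
    (fun x hx => tendsto_ofReal_mul_one_sub_rescale hc hr hm hs hrm (hlim x hx))
    hV.tendsto_atBot hV.tendsto_atTop hW.tendsto_atBot hW.tendsto_atTop hVc hx hx₀ hx₁
    hV₀.2.ne hV₁.1.ne' (hdiv _ hV₀) (hdiv _ hV₁)
  exact ⟨A, B, hA,
    comp_affine_eq_of_eqOn hV.continuousWithinAt_Ici hW.continuousWithinAt_Ici hD hA hAB⟩

theorem exists_tendsto_ratio {r : ℕ → ℝ} {ρ : ℝ} (hρ : 0 < ρ) {kap : ℝ → ℝ}
    (hkap : SurjOn kap (Ioi 0) (Ioi 0))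
    (hratio : ∀ t : ℝ, 0 < t →
      Tendsto (fun n : ℕ => r ⌈(n : ℝ) * t⌉₊ / r n) atTop (𝓝 (kap t ^ ρ)))
    {s : ℝ} (hs : 0 < s) :
    ∃ m : ℕ → ℕ, Tendsto m atTop atTop ∧ Tendsto (fun n => r (m n) / r n) atTop (𝓝 s) := by
  obtain ⟨t, ht, hkt⟩ := hkap (mem_Ioi.2 (Real.rpow_pos_of_pos hs (1 / ρ)))
  refine ⟨fun n => ⌈(n : ℝ) * t⌉₊,
    tendsto_nat_ceil_atTop.comp (tendsto_natCast_atTop_atTop.atTop_mul_const ht), ?_⟩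
  simpa [hkt, ← Real.rpow_mul hs.le, inv_mul_cancel₀ hρ.ne'] using hratio t ht

variable {ψ ψinv : ℝ → ℝ} {ρ : ℝ}

noncomputable def tail (ψ : ℝ → ℝ) (x : ℝ) : ℝ := 1 - ψ (1 / x)

/-- `psiInvRpow ψinv ρ (D (exp (-v))) = v` for `D u = ψ ((-log u) ^ (1 / ρ))`: this transform
turns the Archimax limit `G = D ∘ H` back into `-log H`. -/
noncomputable def psiInvRpow (ψinv : ℝ → ℝ) (ρ : ℝ) (u : ℝ) : ℝ≥0∞ :=
  if 0 < u then ENNReal.ofReal (ψinv u ^ ρ) else ⊤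

theorem psiInvRpow_eq_top_iff {u : ℝ} : psiInvRpow ψinv ρ u = ⊤ ↔ u ≤ 0 := by
  unfold psiInvRpow
  split_ifs with hu
  · simp [hu]
  · simpa using hu

section Generator

variable (hψ : IsArchimedeanGenerator ψ) (hpos : ∀ t : ℝ, 0 ≤ t → 0 < ψ t)
include hψ hpos

theorem _root_.IsArchimedeanGenerator.strictAntiOn : StrictAntiOn ψ (Ici 0) :=
  fun s hs t _ hst => hψ.2.2.2.2 s t hs hst (hpos s hs)

theorem tail_pos {x : ℝ} (hx : 0 < x) : 0 < tail ψ x := by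
  have h := hψ.strictAntiOn hpos (mem_Ici.2 le_rfl) (mem_Ici.2 (one_div_pos.2 hx).le)
    (one_div_pos.2 hx)
  rw [hψ.2.1] at h
  exact sub_pos.2 h

theorem antitoneOn_tail : AntitoneOn (tail ψ) (Ioi 0) := fun _ hx _ hy hxy =>
  sub_le_sub_left ((hψ.strictAntiOn hpos).antitoneOn (mem_Ici.2 (one_div_pos.2 hy).le)
    (mem_Ici.2 (one_div_pos.2 hx).le) (one_div_le_one_div_of_le hx hxy)) 1

variable (hinv : ∀ u ∈ Ioc (0 : ℝ) 1, 0 ≤ ψinv u ∧ ψ (ψinv u) = u)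
include hinv

theorem psiInv_le_iff {u t : ℝ} (hu : u ∈ Ioc 0 1) (ht : 0 ≤ t) : ψinv u ≤ t ↔ ψ t ≤ u := by
  conv_rhs => rw [← (hinv u hu).2]
  exact ((hψ.strictAntiOn hpos).le_iff_ge ht (hinv u hu).1).symm

theorem le_psiInv_iff {u t : ℝ} (hu : u ∈ Ioc 0 1) (ht : 0 ≤ t) : t ≤ ψinv u ↔ u ≤ ψ t := by
  conv_rhs => rw [← (hinv u hu).2]
  exact ((hψ.strictAntiOn hpos).le_iff_ge (hinv u hu).1 ht).symm

theorem psiInv_eq_zero_iff {u : ℝ} (hu : u ∈ Ioc 0 1) : ψinv u = 0 ↔ u = 1 := by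
  rw [← (hψ.strictAntiOn hpos).injOn.eq_iff (hinv u hu).1 (mem_Ici.2 le_rfl), (hinv u hu).2,
    hψ.2.1]

theorem psiInv_pos {u : ℝ} (hu : u ∈ Ioo 0 1) : 0 < ψinv u :=
  (hinv u ⟨hu.1, hu.2.le⟩).1.lt_of_ne' fun h =>
    hu.2.ne ((psiInv_eq_zero_iff hψ hpos hinv ⟨hu.1, hu.2.le⟩).1 h)

theorem ofReal_mul_one_sub_le_iff {η r : ℝ} (hη : 0 < η) (hr : r = 1 / tail ψ η) {δ : ℝ → ℝ}
    (hδ : δ 0 = 0 ∧ ∀ u ∈ Ioc (0 : ℝ) 1, δ u = ψ (η * ψinv u)) {ℓ u : ℝ} (hℓ : ℓ ∈ Ioo 0 1)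
    (hu : u ∈ Icc 0 1) :
    ENNReal.ofReal (r * (1 - u)) ≤ ENNReal.ofReal (tail ψ ((ψinv ℓ)⁻¹ * η) / tail ψ η) ↔
      ℓ ≤ δ u := by
  have hℓ' : ℓ ∈ Ioc 0 1 := ⟨hℓ.1, hℓ.2.le⟩
  have hp : 0 ≤ ψinv ℓ / η := div_nonneg (hinv ℓ hℓ').1 hη.le
  have htail := tail_pos hψ hpos (mul_pos (inv_pos.2 (psiInv_pos hψ hpos hinv hℓ)) hη)
  rw [hr, one_div_mul_eq_div, ENNReal.ofReal_le_ofReal_iff (div_nonneg htail.le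
    (tail_pos hψ hpos hη).le), div_le_div_iff_of_pos_right (tail_pos hψ hpos hη), tail, one_div,
    mul_inv, inv_inv, ← div_eq_mul_inv]
  rcases hu.1.eq_or_lt with rfl | hu₀
  · rw [hδ.1, sub_zero]
    exact iff_of_false (by linarith [hpos _ hp]) hℓ.1.not_ge
  · have hu' : u ∈ Ioc 0 1 := ⟨hu₀, hu.2⟩
    rw [hδ.2 u hu', sub_le_sub_iff_left, ← psiInv_le_iff hψ hpos hinv hu' hp,
      ← le_psiInv_iff hψ hpos hinv hℓ' (mul_nonneg hη.le (hinv u hu').1), le_div_iff₀ hη, mul_comm]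

theorem tendsto_psiInv {α : Type*} {l : Filter α} {g : α → ℝ} (hg : ∀ᶠ y in l, g y ∈ Ioc 0 1)
    {L : ℝ} (hL : L ∈ Ioc 0 1) (h : Tendsto g l (𝓝 L)) :
    Tendsto (fun y => ψinv (g y)) l (𝓝 (ψinv L)) := by
  refine (hψ.strictAntiOn hpos).tendsto_of_tendsto_comp ?_ (hinv L hL).1 ?_
  · filter_upwards [hg] with y hy using (hinv _ hy).1
  · rw [(hinv L hL).2]
    exact h.congr' (by filter_upwards [hg] with y hy using ((hinv _ hy).2).symm)

omit hpos in
theorem mem_Icc_of_eq_psi {η : ℝ} (hη : 0 < η) {δ : ℝ → ℝ}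
    (hδ : δ 0 = 0 ∧ ∀ u ∈ Ioc (0 : ℝ) 1, δ u = ψ (η * ψinv u)) {u : ℝ} (hu : u ∈ Icc 0 1) :
    δ u ∈ Icc 0 1 := by
  rcases hu.1.eq_or_lt with h | h
  · rw [← h, hδ.1]
    exact ⟨le_rfl, zero_le_one⟩
  · rw [hδ.2 _ ⟨h, hu.2⟩]
    exact hψ.2.2.1 _ (mul_nonneg hη.le (hinv _ ⟨h, hu.2⟩).1)

theorem tendsto_ofReal_tail_div_tail {η : ℕ → ℝ} (hηtop : Tendsto η atTop atTop)
    (hRV : ∀ lam : ℝ, 0 < lam →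
      Tendsto (fun t => tail ψ (lam * t) / tail ψ t) atTop (𝓝 (lam ^ (-ρ))))
    {ℓ : ℝ} (hℓ : ℓ ∈ Ioo 0 1) :
    Tendsto (fun n => ENNReal.ofReal (tail ψ ((ψinv ℓ)⁻¹ * η n) / tail ψ (η n))) atTop
      (𝓝 (psiInvRpow ψinv ρ ℓ)) := by
  have hp := psiInv_pos hψ hpos hinv hℓ
  have h := ENNReal.tendsto_ofReal ((hRV _ (inv_pos.2 hp)).comp hηtop)
  rw [psiInvRpow, if_pos hℓ.1]
  rwa [Real.inv_rpow hp.le, Real.rpow_neg hp.le, inv_inv] at h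

variable (hρ : 0 < ρ)
include hρ

theorem psiInvRpow_eq_zero_iff {u : ℝ} (hu : u ∈ Icc 0 1) : psiInvRpow ψinv ρ u = 0 ↔ u = 1 := by
  rcases hu.1.eq_or_lt with rfl | hu₀
  · simp [psiInvRpow]
  rw [psiInvRpow, if_pos hu₀, ENNReal.ofReal_eq_zero,
    ← psiInv_eq_zero_iff hψ hpos hinv ⟨hu₀, hu.2⟩]
  constructor
  · intro h
    by_contra hne
    exact (Real.rpow_pos_of_pos ((hinv u ⟨hu₀, hu.2⟩).1.lt_of_ne' hne) ρ).not_ge h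
  · intro h
    rw [h, Real.zero_rpow hρ.ne']

theorem antitoneOn_psiInvRpow : AntitoneOn (psiInvRpow ψinv ρ) (Icc 0 1) := by
  intro u hu v hv huv
  rcases hu.1.eq_or_lt with rfl | hu₀
  · simp [psiInvRpow]
  have hv₀ : 0 < v := hu₀.trans_le huv
  rw [psiInvRpow, psiInvRpow, if_pos hu₀, if_pos hv₀]
  refine ENNReal.ofReal_le_ofReal (Real.rpow_le_rpow (hinv v ⟨hv₀, hv.2⟩).1 ?_ hρ.le)
  rw [psiInv_le_iff hψ hpos hinv ⟨hv₀, hv.2⟩ (hinv u ⟨hu₀, hu.2⟩).1, (hinv u ⟨hu₀, hu.2⟩).2]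
  exact huv

theorem continuousOn_psiInvRpow : ContinuousOn (psiInvRpow ψinv ρ) (Icc 0 1) := by
  intro L hL
  rcases hL.1.eq_or_lt with rfl | hL₀
  · rw [ContinuousWithinAt, show psiInvRpow ψinv ρ 0 = ⊤ by simp [psiInvRpow]]
    refine (ENNReal.tendsto_nhds_top_iff_nnreal).2 fun b => ?_
    obtain ⟨K, hKb, hK₀⟩ := (((ENNReal.tendsto_ofReal_atTop.comp (tendsto_rpow_atTop hρ)).eventually
      (eventually_gt_nhds (ENNReal.coe_lt_top (r := b)))).and (eventually_ge_atTop 0)).exists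
    filter_upwards [self_mem_nhdsWithin, nhdsWithin_le_nhds (eventually_lt_nhds (hpos K hK₀))]
      with u hu huK
    rcases hu.1.eq_or_lt with rfl | hu₀
    · simp [psiInvRpow]
    rw [psiInvRpow, if_pos hu₀]
    refine hKb.trans_le (ENNReal.ofReal_le_ofReal (Real.rpow_le_rpow hK₀ ?_ hρ.le))
    exact (le_psiInv_iff hψ hpos hinv ⟨hu₀, hu.2⟩ hK₀).2 huK.le
  · have hpos_ev : ∀ᶠ u in 𝓝[Icc 0 1] L, u ∈ Ioc 0 1 := by
      filter_upwards [self_mem_nhdsWithin, nhdsWithin_le_nhds (eventually_gt_nhds hL₀)]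
        with u hu hu₀ using ⟨hu₀, hu.2⟩
    have h := tendsto_psiInv hψ hpos hinv hpos_ev ⟨hL₀, hL.2⟩ nhdsWithin_le_nhds
    rw [ContinuousWithinAt, psiInvRpow, if_pos hL₀]
    refine (ENNReal.tendsto_ofReal ((Real.continuousAt_rpow_const _ _ (Or.inr hρ.le)).tendsto.comp
      h)).congr' ?_
    filter_upwards [hpos_ev] with u hu
    simp [psiInvRpow, hu.1]

theorem tendsto_psiInvRpow {α : Type*} {l : Filter α} [l.NeBot] {g : α → ℝ}
    (hg : ∀ y, g y ∈ Icc 0 1) {L : ℝ} (h : Tendsto g l (𝓝 L)) :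
    Tendsto (fun y => psiInvRpow ψinv ρ (g y)) l (𝓝 (psiInvRpow ψinv ρ L)) := by
  have hL : L ∈ Icc (0 : ℝ) 1 := isClosed_Icc.mem_of_tendsto h (Eventually.of_forall hg)
  exact (continuousOn_psiInvRpow hψ hpos hinv hρ L hL).tendsto.comp
    (tendsto_nhdsWithin_iff.2 ⟨h, Eventually.of_forall hg⟩)

theorem tendsto_ofReal_mul_one_sub {η r : ℕ → ℝ} (hη : ∀ n, 0 < η n)
    (hηtop : Tendsto η atTop atTop)
    (hRV : ∀ lam : ℝ, 0 < lam →
      Tendsto (fun t => tail ψ (lam * t) / tail ψ t) atTop (𝓝 (lam ^ (-ρ))))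
    (hr : ∀ n, r n = 1 / tail ψ (η n)) {δ : ℕ → ℝ → ℝ}
    (hδ : ∀ n, δ n 0 = 0 ∧ ∀ u ∈ Ioc (0 : ℝ) 1, δ n u = ψ (η n * ψinv u))
    {u : ℕ → ℝ} (hu : ∀ n, u n ∈ Icc 0 1) {L : ℝ}
    (hL : Tendsto (fun n => δ n (u n)) atTop (𝓝 L)) :
    Tendsto (fun n => ENNReal.ofReal (r n * (1 - u n))) atTop (𝓝 (psiInvRpow ψinv ρ L)) := by
  -- Compare `δ n (u n)` with levels `ℓ` near `L`: by `ofReal_mul_one_sub_le_iff` this compares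
  -- `r n * (1 - u n)` with a ratio of tails tending to `psiInvRpow ψinv ρ ℓ`.
  have hL01 : L ∈ Icc (0 : ℝ) 1 := isClosed_Icc.mem_of_tendsto hL
    (Eventually.of_forall fun n => mem_Icc_of_eq_psi hψ hinv (hη n) (hδ n) (hu n))
  have hcont := continuousOn_psiInvRpow hψ hpos hinv hρ L hL01
  rw [tendsto_order]
  refine ⟨fun b hb => ?_, fun b hb => ?_⟩
  · have hL1 : L < 1 := hL01.2.lt_of_ne fun h => by
      rw [h, (psiInvRpow_eq_zero_iff hψ hpos hinv hρ ⟨zero_le_one, le_rfl⟩).2 rfl] at hb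
      exact not_lt_zero hb
    have := left_nhdsWithin_Ioo_neBot hL1
    obtain ⟨ℓ, hbℓ, hℓ⟩ := (((hcont.mono (Ioo_subset_Icc_self.trans
      (Icc_subset_Icc hL01.1 le_rfl))).eventually (eventually_gt_nhds hb)).and
        self_mem_nhdsWithin).exists
    have hℓ' : ℓ ∈ Ioo (0 : ℝ) 1 := ⟨hL01.1.trans_lt hℓ.1, hℓ.2⟩
    filter_upwards [(tendsto_ofReal_tail_div_tail hψ hpos hinv hηtop hRV hℓ').eventually
      (eventually_gt_nhds hbℓ), hL.eventually (eventually_lt_nhds hℓ.1)] with n h_lim h_lt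
    exact h_lim.trans (not_le.1 fun h => h_lt.not_ge
      ((ofReal_mul_one_sub_le_iff hψ hpos hinv (hη n) (hr n) (hδ n) hℓ' (hu n)).1 h))
  · have hL0 : 0 < L := hL01.1.lt_of_ne fun h => by
      rw [← h, psiInvRpow_eq_top_iff.2 le_rfl] at hb
      exact not_top_lt hb
    have := right_nhdsWithin_Ioo_neBot hL0
    obtain ⟨ℓ, hbℓ, hℓ⟩ := (((hcont.mono (Ioo_subset_Icc_self.trans
      (Icc_subset_Icc le_rfl hL01.2))).eventually (eventually_lt_nhds hb)).and
        self_mem_nhdsWithin).exists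
    have hℓ' : ℓ ∈ Ioo (0 : ℝ) 1 := ⟨hℓ.1, hℓ.2.trans_le hL01.2⟩
    filter_upwards [(tendsto_ofReal_tail_div_tail hψ hpos hinv hηtop hRV hℓ').eventually
      (eventually_lt_nhds hbℓ), hL.eventually (eventually_gt_nhds hℓ.2)] with n h_lim h_gt
    exact ((ofReal_mul_one_sub_le_iff hψ hpos hinv (hη n) (hr n) (hδ n) hℓ' (hu n)).2
      h_gt.le).trans_lt h_lim

omit hψ hpos in
theorem eq_psi_of_psiInvRpow_eq {u v : ℝ} (hu : u ∈ Icc 0 1) (hv : 0 ≤ v)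
    (h : psiInvRpow ψinv ρ u = ENNReal.ofReal v) : u = ψ (v ^ (1 / ρ)) := by
  have hu₀ : 0 < u := not_le.1 fun h' => ENNReal.ofReal_ne_top (h ▸ psiInvRpow_eq_top_iff.2 h')
  rw [psiInvRpow, if_pos hu₀,
    ENNReal.ofReal_eq_ofReal_iff (Real.rpow_nonneg (hinv u ⟨hu₀, hu.2⟩).1 ρ) hv] at h
  rw [← h, ← Real.rpow_mul (hinv u ⟨hu₀, hu.2⟩).1, mul_one_div_cancel hρ.ne', Real.rpow_one,
    (hinv u ⟨hu₀, hu.2⟩).2]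

theorem psiInvRpow_mem_Ioo {u : ℝ} (hu : u ∈ Ioo 0 1) : psiInvRpow ψinv ρ u ∈ Ioo 0 ⊤ :=
  ⟨pos_iff_ne_zero.2 fun h =>
      hu.2.ne ((psiInvRpow_eq_zero_iff hψ hpos hinv hρ ⟨hu.1.le, hu.2.le⟩).1 h),
    lt_top_iff_ne_top.2 fun h => (psiInvRpow_eq_top_iff.1 h).not_gt hu.1⟩

theorem isNegLogDistFun_psiInvRpow_comp {G : ℝ → ℝ} (hG : IsDistFun G) :
    IsNegLogDistFun fun x => psiInvRpow ψinv ρ (G x) where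
  antitone _ _ h := antitoneOn_psiInvRpow hψ hpos hinv hρ (hG.2.2.2.2 _) (hG.2.2.2.2 _) (hG.1 h)
  continuousWithinAt_Ici x := tendsto_psiInvRpow hψ hpos hinv hρ hG.2.2.2.2 (hG.2.1 x)
  tendsto_atBot := by
    have h := tendsto_psiInvRpow hψ hpos hinv hρ hG.2.2.2.2 hG.2.2.1
    rwa [psiInvRpow_eq_top_iff.2 le_rfl] at h
  tendsto_atTop := by
    have h := tendsto_psiInvRpow hψ hpos hinv hρ hG.2.2.2.2 hG.2.2.2.1
    rwa [(psiInvRpow_eq_zero_iff hψ hpos hinv hρ ⟨zero_le_one, le_rfl⟩).2 rfl] at h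

omit hψ hpos in
theorem eq_ite_of_psiInvRpow_eq_negLog {u h : ℝ} (hu : u ∈ Icc 0 1) (hh : h ∈ Icc 0 1)
    (heq : psiInvRpow ψinv ρ u = negLog h) :
    u = if h = 0 then 0 else ψ ((-Real.log h) ^ (1 / ρ)) := by
  split_ifs with h₀
  · rw [h₀, negLog, if_pos rfl, psiInvRpow_eq_top_iff] at heq
    exact le_antisymm heq hu.1
  · rw [negLog, if_neg h₀] at heq
    exact eq_psi_of_psiInvRpow_eq hinv hρ hu (neg_nonneg.2 (Real.log_nonpos hh.1 hh.2)) heq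

end Generator

end Archimax

/-- Proposition on uniqueness of Archimax limits. -/
theorem archimax_limit_uniqueness
    (ψ ψinv : ℝ → ℝ) (η : ℕ → ℝ) (r : ℕ → ℝ) (ρ : ℝ) (kap : ℝ → ℝ)
    (hψ : IsArchimedeanGenerator ψ) (hstrict : ∀ t : ℝ, 0 ≤ t → 0 < ψ t)
    (hψinv : ∀ u ∈ Ioc (0:ℝ) 1, 0 ≤ ψinv u ∧ ψ (ψinv u) = u)
    (hη : ∀ n, 0 < η n) (hηtop : Tendsto η atTop atTop)
    (hρ : ρ ∈ Ioc (0:ℝ) 1)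
    (hRV : ∀ lam : ℝ, 0 < lam →
      Tendsto (fun t : ℝ => (1 - ψ (1 / (lam * t))) / (1 - ψ (1 / t))) atTop
        (nhds (lam ^ (-ρ))))
    (hr : ∀ n, r n = 1 / (1 - ψ (1 / η n)))
    (hkap : Set.BijOn kap (Ioi 0) (Ioi 0))
    (hkapconv : ∀ t : ℝ, 0 < t →
      Tendsto (fun n : ℕ => η (Nat.ceil ((n : ℝ) * t)) / η n) atTop (nhds (kap t))) :
    (∀ t : ℝ, 0 < t →
      Tendsto (fun n : ℕ => r (Nat.ceil ((n : ℝ) * t)) / r n) atTop (nhds (kap t ^ ρ))) ∧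
    ∀ F G : ℝ → ℝ, ∀ δ : ℕ → ℝ → ℝ, ∀ cs ds : ℕ → ℝ,
      IsDistFun F → Continuous F →
      (∀ n, δ n 0 = 0 ∧ ∀ u ∈ Ioc (0:ℝ) 1, δ n u = ψ (η n * ψinv u)) →
      (∀ n, 0 < cs n) → IsDistFun G → ¬ IsDegenerateDF G →
      (∀ x, ContinuousAt G x →
        Tendsto (fun n => δ n (F (cs n * x + ds n))) atTop (nhds (G x))) →
      ∃ H : ℝ → ℝ, IsGEV H ∧
        ∀ x, G x = if H x = 0 then 0 else ψ ((-Real.log (H x)) ^ (1 / ρ)) := by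
  open Archimax in
  have hr₀ : ∀ n, 0 < r n := fun n => by
    rw [hr]
    exact one_div_pos.2 (tail_pos hψ hstrict (hη n))
  have hratio : ∀ t : ℝ, 0 < t →
      Tendsto (fun n : ℕ => r ⌈(n : ℝ) * t⌉₊ / r n) atTop (𝓝 (kap t ^ ρ)) := fun t ht => by
    simp only [hr]
    exact tendsto_inv_div_inv_of_tendsto_div (antitoneOn_tail hψ hstrict)
      (fun x hx => tail_pos hψ hstrict hx) hRV hη hηtop (hkap.mapsTo ht) (hkapconv t ht)
  refine ⟨hratio, fun F G δ cs ds hF _ hδ hcs hG hnd hconv => ?_⟩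
  set V := fun x => psiInvRpow ψinv ρ (G x)
  have hV : IsNegLogDistFun V := isNegLogDistFun_psiInvRpow_comp hψ hstrict hψinv hρ.1 hG
  have hlim : ∀ x, ContinuousAt G x → Tendsto (fun n => ENNReal.ofReal
      (r n * (1 - F (cs n * x + ds n)))) atTop (𝓝 (V x)) := fun x hx =>
    tendsto_ofReal_mul_one_sub hψ hstrict hψinv hρ.1 hη hηtop hRV hr hδ
      (fun n => hF.2.2.2.2 _) (hconv x hx)
  obtain ⟨x₀, x₁, hx, hx₀, hx₁, hG₀, hG₁⟩ := hG.exists_lt_continuousAt_mem_Ioo hnd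
  have hV₀ := psiInvRpow_mem_Ioo hψ hstrict hψinv hρ.1 hG₀
  have hstab : IsMaxStable V := isMaxStable_of_tendsto hF.1 hcs hr₀
    (fun s hs => exists_tendsto_ratio hρ.1 hkap.surjOn hratio hs) hV
    hG.countable_compl_continuousAt
    (fun x hx => tendsto_psiInvRpow hψ hstrict hψinv hρ.1 hG.2.2.2.2 hx) hlim hx hx₀ hx₁ hV₀
    (psiInvRpow_mem_Ioo hψ hstrict hψinv hρ.1 hG₁)
  obtain ⟨H, ⟨ξ, μ, σ, hσ, rfl⟩, hVH⟩ := hV.exists_isGEV hstab hV₀.1.ne' hV₀.2.ne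
  exact ⟨_, ⟨ξ, μ, σ, hσ, rfl⟩, fun x => eq_ite_of_psiInvRpow_eq_negLog hψinv hρ.1
    (hG.2.2.2.2 x) (GEVcdf_mem_Icc ξ μ σ x) (hVH x)⟩
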